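/- arXiv:2205.05179 — 5 statements merged into one kernel-verified Lean document; each statement's English description precedes it below -/
import Mathlib

section
/- Every topological n-manifold M has topological (covering) dimension at most n: every open cover of M possesses an open refinement of order at most n. -/
/-- The closed half-space in `ℝ^n` (`≅ ℝ^{n-1} × [0,∞)` for `n ≥ 1`):
points of `ℝ^n` whose last coordinate is nonnegative. -/
def HalfSpace (n : ℕ) : Set (Fin n → ℝ) :=
  {y | ∀ i : Fin n, (i : ℕ) + 1 = n → 0 ≤ y i}

/-- A topological `n`-manifold (with or without boundary): a second-countable Hausdorff
space each of whose points has an open neighbourhood homeomorphic to an open subset of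
`ℝ^n` or to an open subset of the half-space `ℝ^{n-1} × [0,∞)`. -/
def IsTopManifold (n : ℕ) (M : Type*) [TopologicalSpace M] : Prop :=
  SecondCountableTopology M ∧ T2Space M ∧
    ∀ x : M, ∃ U : Set M, IsOpen U ∧ x ∈ U ∧
      ∃ s : Set (Fin n → ℝ),
        (IsOpen s ∨ ∃ t : Set (Fin n → ℝ), IsOpen t ∧ s = t ∩ HalfSpace n) ∧
        Nonempty (↥U ≃ₜ ↥s)

/-- A family `𝒜` of subsets of `X` has order at most `m`: no point of `X` lies in more
than `m + 1` distinct elements of `𝒜`. -/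
def OrderAtMost {X : Type*} (𝒜 : Set (Set X)) (m : ℕ) : Prop :=
  ∀ (x : X) (𝒮 : Finset (Set X)), (∀ A ∈ 𝒮, A ∈ 𝒜 ∧ x ∈ A) → 𝒮.card ≤ m + 1

/-- The topological (covering) dimension of `X` is at most `m`: every open cover of `X`
possesses an open refinement (an open cover each of whose members is contained in some
member of the original cover) of order at most `m`. -/
def TopDimLE (X : Type*) [TopologicalSpace X] (m : ℕ) : Prop :=
  ∀ 𝒰 : Set (Set X), (∀ U ∈ 𝒰, IsOpen U) → ⋃₀ 𝒰 = Set.univ →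
    ∃ 𝒱 : Set (Set X), (∀ V ∈ 𝒱, IsOpen V) ∧ ⋃₀ 𝒱 = Set.univ ∧
      (∀ V ∈ 𝒱, ∃ U ∈ 𝒰, V ⊆ U) ∧ OrderAtMost 𝒱 m

/-!
Through charts, an open cover of a compact subset `K` of a chart domain pulls back to `ℝⁿ`,
where the open stars of the vertices of a fine Freudenthal–Kuhn triangulation form an open cover
of order `n`; grouping the stars meeting `K` according to a cover member containing them (which
exists by the Lebesgue number lemma) gives a shrinking of order `≤ n` near `K`. A manifold is
covered by countably many such compact pieces `K k` with open neighbourhoods `U k` forming a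
locally finite family. Shrinking a given open cover near `K 0`, `K 1`, … in turn, each time only
inside `U k`, the order near earlier pieces can only drop, and local finiteness makes the limit
an open cover of order `≤ n`.
-/

open Set Filter Topology Metric

section FamilyOrder

/-- Indexed variant of `OrderAtMost`: it counts indices, so repeated members count repeatedly. -/
def FamilyOrderLE {X ι : Type*} (W : ι → Set X) (m : ℕ) : Prop :=
  ∀ x, {i | x ∈ W i}.encard ≤ m + 1

variable {X ι κ : Type*} {m : ℕ}

theorem FamilyOrderLE.comp_injective {B : κ → Set X} (hB : FamilyOrderLE B m) {g : ι → κ}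
    (hg : g.Injective) : FamilyOrderLE (B ∘ g) m := fun x =>
  calc {i | x ∈ B (g i)}.encard = (g '' (g ⁻¹' {u | x ∈ B u})).encard := (hg.encard_image _).symm
    _ ≤ {u | x ∈ B u}.encard := encard_le_encard (image_preimage_subset _ _)
    _ ≤ m + 1 := hB x

theorem FamilyOrderLE.iUnion_fiber {B : κ → Set X} (hB : FamilyOrderLE B m) (a : κ → ι) :
    FamilyOrderLE (fun i => ⋃ (u) (_ : a u = i), B u) m := fun x =>
  calc {i | x ∈ ⋃ (u) (_ : a u = i), B u}.encard = (a '' {u | x ∈ B u}).encard := by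
        congr 1; ext i; simp [and_comm]
    _ ≤ {u | x ∈ B u}.encard := encard_image_le _ _
    _ ≤ m + 1 := hB x

theorem FamilyOrderLE.orderAtMost_range {W : ι → Set X} (hW : FamilyOrderLE W m) :
    OrderAtMost (range W) m := by
  intro x 𝒮 h𝒮
  have h𝒮W : (𝒮 : Set (Set X)) ⊆ W '' {i | x ∈ W i} := fun A hA => by
    obtain ⟨⟨i, rfl⟩, hx⟩ := h𝒮 A hA
    exact ⟨i, hx, rfl⟩
  have := (encard_le_encard h𝒮W).trans ((encard_image_le _ _).trans (hW x))
  rw [encard_coe_eq_coe_finsetCard] at this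
  exact_mod_cast this

end FamilyOrder

section Shrinking

def HasShrinkingOfOrderLE {X : Type*} [TopologicalSpace X] (ι : Type*) (K : Set X) (m : ℕ) :
    Prop :=
  ∀ V : ι → Set X, (∀ i, IsOpen (V i)) → K ⊆ ⋃ i, V i →
    ∃ W : ι → Set X, (∀ i, IsOpen (W i)) ∧ (∀ i, W i ⊆ V i) ∧ K ⊆ ⋃ i, W i ∧ FamilyOrderLE W m

variable {X Y : Type*} [TopologicalSpace X] [TopologicalSpace Y] {ι : Type*} {m : ℕ}

theorem hasShrinkingOfOrderLE_empty : HasShrinkingOfOrderLE ι (∅ : Set X) m :=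
  fun _ _ _ => ⟨fun _ => ∅, fun _ => isOpen_empty, fun _ => empty_subset _, empty_subset _,
    fun _ => by simp⟩

theorem HasShrinkingOfOrderLE.of_isInducing {e : X → Y} (he : IsInducing e) {K : Set X}
    (h : HasShrinkingOfOrderLE ι (e '' K) m) : HasShrinkingOfOrderLE ι K m := by
  intro V hVo hKV
  choose t ht hte using fun i => he.isOpen_iff.1 (hVo i)
  obtain ⟨T, hTo, hTt, hKT, hTord⟩ := h t ht <| image_subset_iff.2 fun x hx => by
    simpa [← hte] using hKV hx
  refine ⟨fun i => e ⁻¹' T i, fun i => (hTo i).preimage he.continuous,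
    fun i => hte i ▸ preimage_mono (hTt i), fun x hx => by simpa using hKT (mem_image_of_mem e hx),
    fun x => hTord (e x)⟩

theorem HasShrinkingOfOrderLE.image_of_isOpenEmbedding {f : X → Y} (hf : IsOpenEmbedding f)
    {K : Set X} (h : HasShrinkingOfOrderLE ι K m) : HasShrinkingOfOrderLE ι (f '' K) m := by
  intro V hVo hKV
  obtain ⟨W, hWo, hWV, hKW, hWord⟩ := h (fun i => f ⁻¹' V i)
    (fun i => (hVo i).preimage hf.continuous) (by simpa [image_subset_iff] using hKV)
  refine ⟨fun i => f '' W i, fun i => hf.isOpenMap _ (hWo i), fun i => image_subset_iff.2 (hWV i),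
    ?_, fun y => ?_⟩
  · rintro _ ⟨x, hx, rfl⟩
    obtain ⟨i, hi⟩ := mem_iUnion.1 (hKW hx)
    exact mem_iUnion.2 ⟨i, mem_image_of_mem f hi⟩
  · by_cases hy : y ∈ range f
    · obtain ⟨x, rfl⟩ := hy
      simpa only [hf.injective.mem_set_image] using hWord x
    · have : {i | y ∈ f '' W i} = ∅ :=
        eq_empty_of_forall_notMem fun i ⟨x, _, hx⟩ => hy ⟨x, hx⟩
      rw [this, encard_empty]
      exact bot_le

theorem IsCompact.hasShrinkingOfOrderLE {X κ : Type*} [PseudoMetricSpace X] {K : Set X}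
    (hK : IsCompact K)
    (hfine : ∀ δ > 0, ∃ B : κ → Set X, (∀ u, IsOpen (B u)) ∧ ⋃ u, B u = univ ∧
      (∀ u, ∀ z ∈ B u, B u ⊆ ball z δ) ∧ FamilyOrderLE B m) :
    HasShrinkingOfOrderLE ι K m := by
  intro V hVo hKV
  obtain ⟨δ, hδ, hball⟩ := lebesgue_number_lemma_of_metric hK hVo hKV
  obtain ⟨B, hBo, hBcov, hBball, hBord⟩ := hfine δ hδ
  have hsel : ∀ u : {u // (B u ∩ K).Nonempty}, ∃ i, B u ⊆ V i := fun ⟨u, z, hzB, hzK⟩ =>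
    (hball z hzK).imp fun _ hi => (hBball u z hzB).trans hi
  choose a ha using hsel
  refine ⟨fun i => ⋃ (u) (_ : a u = i), B u, fun i => isOpen_iUnion fun u => isOpen_iUnion
    fun _ => hBo u, fun i => iUnion₂_subset fun u hu => hu ▸ ha u, fun x hx => ?_,
    (hBord.comp_injective Subtype.val_injective).iUnion_fiber a⟩
  obtain ⟨u, hu⟩ := mem_iUnion.1 (hBcov ▸ mem_univ x)
  exact mem_iUnion.2 ⟨a ⟨u, x, hu, hx⟩, mem_iUnion₂.2 ⟨⟨u, x, hu, hx⟩, rfl, hu⟩⟩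

end Shrinking

section KuhnStar

variable {n : ℕ}

/-- The open star of the vertex `u` in the Freudenthal–Kuhn triangulation of `ℝⁿ`: the points `y`
for which `0` and all the `y j - u j` lie in an open interval of length `1`. -/
def kuhnStar (u : Fin n → ℤ) : Set (Fin n → ℝ) :=
  {y | (∀ j, |y j - u j| < 1) ∧ ∀ j l, y j - u j - (y l - u l) < 1}

theorem isOpen_kuhnStar (u : Fin n → ℤ) : IsOpen (kuhnStar u) := by
  simp only [kuhnStar, ofPred_and, ofPred_forall]
  exact (isOpen_iInter_of_finite fun j => isOpen_lt (by fun_prop) continuous_const).inter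
    (isOpen_iInter_of_finite fun j => isOpen_iInter_of_finite fun l =>
      isOpen_lt (by fun_prop) continuous_const)

theorem mem_kuhnStar_floor (y : Fin n → ℝ) : y ∈ kuhnStar fun j => ⌊y j⌋ := by
  simp only [kuhnStar, mem_ofPred_eq, Int.self_sub_floor]
  exact ⟨fun j => by rw [abs_of_nonneg (Int.fract_nonneg _)]; exact Int.fract_lt_one _,
    fun j l => by linarith [Int.fract_lt_one (y j), Int.fract_nonneg (y l)]⟩

theorem kuhnStar_subset_ball (u : Fin n → ℤ) : kuhnStar u ⊆ ball (fun j => (u j : ℝ)) 1 :=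
  fun _ hy => (dist_pi_lt_iff one_pos).2 fun j => hy.1 j

theorem floor_le_and_le_floor_add_one_of_mem_kuhnStar {u : Fin n → ℤ} {y : Fin n → ℝ}
    (hy : y ∈ kuhnStar u) (j : Fin n) : ⌊y j⌋ ≤ u j ∧ u j ≤ ⌊y j⌋ + 1 := by
  obtain ⟨h₁, h₂⟩ := abs_lt.1 (hy.1 j)
  have hlo := Int.floor_lt.2 (show y j < ((u j + 1 : ℤ) : ℝ) by push_cast; linarith)
  have hhi := Int.le_floor.2 (show ((u j - 1 : ℤ) : ℝ) ≤ y j by push_cast; linarith)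
  omega

/-- This is why a point lies in at most `n + 1` stars. -/
theorem le_or_le_of_mem_kuhnStar {u v : Fin n → ℤ} {y : Fin n → ℝ} (hu : y ∈ kuhnStar u)
    (hv : y ∈ kuhnStar v) : u ≤ v ∨ v ≤ u := by
  by_contra! h
  obtain ⟨⟨l, hl⟩, ⟨j, hj⟩⟩ : (∃ l, v l < u l) ∧ ∃ j, u j < v j := by
    simpa [Pi.le_def] using h
  have hl' : (1 : ℝ) ≤ u l - v l := by exact_mod_cast (by omega : 1 ≤ u l - v l)
  have hj' : (1 : ℝ) ≤ v j - u j := by exact_mod_cast (by omega : 1 ≤ v j - u j)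
  linarith [hu.2 j l, hv.2 l j]

theorem encard_setOf_mem_kuhnStar_le (y : Fin n → ℝ) :
    {u | y ∈ kuhnStar u}.encard ≤ n + 1 := by
  set a := ∑ j, ⌊y j⌋
  have hmaps : MapsTo (fun u : Fin n → ℤ => ∑ j, u j) {u | y ∈ kuhnStar u} (Icc a (a + n)) :=
    fun u hu => by
      have h := floor_le_and_le_floor_add_one_of_mem_kuhnStar hu
      refine ⟨Finset.sum_le_sum fun j _ => (h j).1, ?_⟩
      calc ∑ j, u j ≤ ∑ j, (⌊y j⌋ + 1) := Finset.sum_le_sum fun j _ => (h j).2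
        _ = a + n := by simp [a, Finset.sum_add_distrib]
  have heq : ∀ u v : Fin n → ℤ, u ≤ v → ∑ j, u j = ∑ j, v j → u = v := fun u v h huv =>
    funext fun j => (Finset.sum_eq_sum_iff_of_le fun j _ => h j).1 huv j (Finset.mem_univ j)
  have hinj : InjOn (fun u : Fin n → ℤ => ∑ j, u j) {u | y ∈ kuhnStar u} := by
    intro u hu v hv huv
    rcases le_or_le_of_mem_kuhnStar hu hv with h | h
    exacts [heq u v h huv, (heq v u h huv.symm).symm]
  calc {u | y ∈ kuhnStar u}.encard ≤ (Icc a (a + n)).encard := encard_le_encard_of_injOn hmaps hinj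
    _ = n + 1 := by
      rw [← Finset.coe_Icc, encard_coe_eq_coe_finsetCard, Int.card_Icc]
      norm_cast; omega

theorem exists_fine_cover_pi (n : ℕ) {δ : ℝ} (hδ : 0 < δ) :
    ∃ B : (Fin n → ℤ) → Set (Fin n → ℝ), (∀ u, IsOpen (B u)) ∧ ⋃ u, B u = univ ∧
      (∀ u, ∀ z ∈ B u, B u ⊆ ball z δ) ∧ FamilyOrderLE B n := by
  refine ⟨fun u => (fun y => (2 / δ) • y) ⁻¹' kuhnStar u,
    fun u => (isOpen_kuhnStar u).preimage (continuous_const_smul _),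
    eq_univ_of_forall fun y => mem_iUnion.2 ⟨_, mem_kuhnStar_floor _⟩, fun u z hz y hy => ?_,
    fun y => encard_setOf_mem_kuhnStar_le _⟩
  set c : Fin n → ℝ := (δ / 2) • fun j => (u j : ℝ)
  have hc : ∀ w, (2 / δ) • w ∈ kuhnStar u → dist w c < δ / 2 := fun w hw =>
    calc dist w c = dist ((δ / 2) • (2 / δ) • w) c := by
          rw [smul_smul, show δ / 2 * (2 / δ) = 1 by field_simp, one_smul]
      _ = δ / 2 * dist ((2 / δ) • w) fun j => (u j : ℝ) := by
          rw [dist_smul₀, Real.norm_of_nonneg (by positivity)]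
      _ < δ / 2 := mul_lt_of_lt_one_right (by positivity) (kuhnStar_subset_ball u hw)
  rw [mem_ball]
  linarith [dist_triangle_right y z c, hc y hy, hc z hz]

end KuhnStar

section Iteration

variable {X : Type*} [TopologicalSpace X] {ι : Type*} {m : ℕ}

theorem IsCompact.hasShrinkingOfOrderLE_of_isInducing {n : ℕ} {O : Set X} (hO : IsOpen O)
    {e : O → (Fin n → ℝ)} (he : IsInducing e) {K : Set X} (hK : IsCompact K) (hKO : K ⊆ O) :
    HasShrinkingOfOrderLE ι K n := by
  have hK' : Subtype.val '' (Subtype.val ⁻¹' K : Set O) = K := by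
    rw [Subtype.image_preimage_coe, inter_eq_right.2 hKO]
  have hK'c : IsCompact (Subtype.val ⁻¹' K : Set O) := by rwa [Subtype.isCompact_iff, hK']
  rw [← hK']
  exact (((hK'c.image he.continuous).hasShrinkingOfOrderLE fun _ hδ => exists_fine_cover_pi n hδ)
    |>.of_isInducing he).image_of_isOpenEmbedding hO.isOpenEmbedding_subtypeVal

theorem HasShrinkingOfOrderLE.exists_shrink_within [LocallyCompactSpace X] [RegularSpace X]
    {K U : Set X} (h : HasShrinkingOfOrderLE ι K m) (hK : IsCompact K) (hU : IsOpen U)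
    (hKU : K ⊆ U) {V : ι → Set X} (hVo : ∀ i, IsOpen (V i)) (hV : ⋃ i, V i = univ) :
    ∃ V' : ι → Set X, (∀ i, IsOpen (V' i)) ∧ ⋃ i, V' i = univ ∧ (∀ i, V' i ⊆ V i) ∧
      (∀ i, V i \ U ⊆ V' i) ∧ ∀ x ∈ K, {i | x ∈ V' i}.encard ≤ m + 1 := by
  obtain ⟨W, hWo, hWV, hKW, hWord⟩ := h (fun i => V i ∩ U) (fun i => (hVo i).inter hU)
    fun x hx => by
      obtain ⟨i, hi⟩ := mem_iUnion.1 (hV ▸ mem_univ x)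
      exact mem_iUnion.2 ⟨i, hi, hKU hx⟩
  obtain ⟨C, -, hCc, hKC, hCW⟩ := exists_compact_closed_between hK (isOpen_iUnion hWo) hKW
  have hCU : C ⊆ U := hCW.trans (iUnion_subset fun i => (hWV i).trans inter_subset_right)
  refine ⟨fun i => W i ∪ V i \ C, fun i => (hWo i).union ((hVo i).sdiff hCc),
    eq_univ_of_forall fun x => ?_, fun i => union_subset ((hWV i).trans inter_subset_left)
    sdiff_subset, fun i x hx => Or.inr ⟨hx.1, fun hxC => hx.2 (hCU hxC)⟩, fun x hx => ?_⟩
  · by_cases hxC : x ∈ C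
    · obtain ⟨i, hi⟩ := mem_iUnion.1 (hCW hxC)
      exact mem_iUnion.2 ⟨i, Or.inl hi⟩
    · obtain ⟨i, hi⟩ := mem_iUnion.1 (hV ▸ mem_univ x)
      exact mem_iUnion.2 ⟨i, Or.inr ⟨hi, hxC⟩⟩
  · refine (encard_le_encard fun i hi => ?_).trans (hWord x)
    exact (hi : x ∈ W i ∪ V i \ C).resolve_right fun hi => hi.2 (interior_subset (hKC hx))

section Limit

variable {V : ℕ → ι → Set X} {U : ℕ → Set X}

theorem exists_mem_nhds_inter_subset_iInter (hU : LocallyFinite U)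
    (hanti : ∀ k i, V (k + 1) i ⊆ V k i) (hout : ∀ k i, V k i \ U k ⊆ V (k + 1) i) (x : X) :
    ∃ N ∈ 𝓝 x, ∃ b, ∀ i, V b i ∩ N ⊆ ⋂ k, V k i := by
  obtain ⟨N, hN, hfin⟩ := hU x
  obtain ⟨b, hb⟩ := hfin.bddAbove
  refine ⟨N, hN, b + 1, fun i y hy => mem_iInter.2 fun k => ?_⟩
  rcases le_total k (b + 1) with hk | hk
  · exact antitone_nat_of_succ_le (f := fun k => V k i) (hanti · i) hk hy.1
  · induction k, hk using Nat.le_induction with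
    | base => exact hy.1
    | succ k hk ih =>
      refine hout k i ⟨ih, fun hyU => ?_⟩
      have : k ≤ b := hb ⟨y, hyU, hy.2⟩
      omega

theorem isOpen_iInter_of_locallyFinite (hU : LocallyFinite U)
    (hanti : ∀ k i, V (k + 1) i ⊆ V k i) (hout : ∀ k i, V k i \ U k ⊆ V (k + 1) i)
    (hVo : ∀ k i, IsOpen (V k i)) (i : ι) : IsOpen (⋂ k, V k i) := by
  refine isOpen_iff_mem_nhds.2 fun x hx => ?_
  obtain ⟨N, hN, b, hb⟩ := exists_mem_nhds_inter_subset_iInter hU hanti hout x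
  exact mem_of_superset (inter_mem ((hVo b i).mem_nhds (mem_iInter.1 hx b)) hN) (hb i)

theorem iUnion_iInter_eq_univ_of_locallyFinite (hU : LocallyFinite U)
    (hanti : ∀ k i, V (k + 1) i ⊆ V k i) (hout : ∀ k i, V k i \ U k ⊆ V (k + 1) i)
    (hV : ∀ k, ⋃ i, V k i = univ) : ⋃ i, ⋂ k, V k i = univ := by
  refine eq_univ_of_forall fun x => ?_
  obtain ⟨N, hN, b, hb⟩ := exists_mem_nhds_inter_subset_iInter hU hanti hout x
  obtain ⟨i, hi⟩ := mem_iUnion.1 (hV b ▸ mem_univ x)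
  exact mem_iUnion.2 ⟨i, hb i ⟨hi, mem_of_mem_nhds hN⟩⟩

end Limit

theorem hasShrinkingOfOrderLE_univ_of_nat [LocallyCompactSpace X] [RegularSpace X]
    {K U : ℕ → Set X} (hK : ∀ k, IsCompact (K k)) (hU : ∀ k, IsOpen (U k)) (hKU : ∀ k, K k ⊆ U k)
    (hlf : LocallyFinite U) (hcov : ⋃ k, K k = univ) (h : ∀ k, HasShrinkingOfOrderLE ι (K k) m) :
    HasShrinkingOfOrderLE ι (univ : Set X) m := by
  intro V hVo hV
  let OpenCover := {V : ι → Set X // (∀ i, IsOpen (V i)) ∧ ⋃ i, V i = univ}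
  have step : ∀ k (V : OpenCover), ∃ V' : OpenCover, (∀ i, V'.1 i ⊆ V.1 i) ∧
      (∀ i, V.1 i \ U k ⊆ V'.1 i) ∧ ∀ x ∈ K k, {i | x ∈ V'.1 i}.encard ≤ m + 1 := fun k V =>
    let ⟨V', hV'o, hV', hsub⟩ := (h k).exists_shrink_within (hK k) (hU k) (hKU k) V.2.1 V.2.2
    ⟨⟨V', hV'o, hV'⟩, hsub⟩
  choose next hnext using step
  let seq : ℕ → OpenCover := fun k => Nat.rec ⟨V, hVo, univ_subset_iff.1 hV⟩ next k
  have hanti : ∀ k i, (seq (k + 1)).1 i ⊆ (seq k).1 i := fun k => (hnext k (seq k)).1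
  have hout : ∀ k i, (seq k).1 i \ U k ⊆ (seq (k + 1)).1 i := fun k => (hnext k (seq k)).2.1
  refine ⟨fun i => ⋂ k, (seq k).1 i,
    isOpen_iInter_of_locallyFinite hlf hanti hout fun k => (seq k).2.1,
    fun i => iInter_subset _ 0,
    (iUnion_iInter_eq_univ_of_locallyFinite hlf hanti hout fun k => (seq k).2.2).ge, fun x => ?_⟩
  obtain ⟨k, hk⟩ := mem_iUnion.1 (hcov ▸ mem_univ x)
  refine (encard_le_encard (t := {i | x ∈ (next k (seq k)).1 i}) fun i hi => ?_).trans
    ((hnext k (seq k)).2.2 x hk)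
  exact mem_iInter.1 hi (k + 1)

theorem hasShrinkingOfOrderLE_univ_of_countable [LocallyCompactSpace X] [RegularSpace X]
    {α : Type*} [Countable α] {K U : α → Set X} (hK : ∀ a, IsCompact (K a))
    (hU : ∀ a, IsOpen (U a)) (hKU : ∀ a, K a ⊆ U a) (hlf : LocallyFinite U)
    (hcov : ⋃ a, K a = univ) (h : ∀ a, HasShrinkingOfOrderLE ι (K a) m) :
    HasShrinkingOfOrderLE ι (univ : Set X) m := by
  obtain ⟨j, hj⟩ := exists_injective_nat α
  set K' := Function.extend j K fun _ => ∅
  set U' := Function.extend j U fun _ => ∅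
  have hcases : ∀ k, (∃ a, j a = k ∧ K' k = K a ∧ U' k = U a) ∨ (K' k = ∅ ∧ U' k = ∅) := by
    intro k
    by_cases hk : ∃ a, j a = k
    · obtain ⟨a, rfl⟩ := hk
      exact Or.inl ⟨a, rfl, hj.extend_apply _ _ _, hj.extend_apply _ _ _⟩
    · exact Or.inr ⟨Function.extend_apply' _ _ _ hk, Function.extend_apply' _ _ _ hk⟩
  have hpiece : ∀ k, IsCompact (K' k) ∧ IsOpen (U' k) ∧ K' k ⊆ U' k ∧
      HasShrinkingOfOrderLE ι (K' k) m := by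
    intro k
    rcases hcases k with ⟨a, -, hKa, hUa⟩ | ⟨hKa, hUa⟩ <;> rw [hKa, hUa]
    · exact ⟨hK a, hU a, hKU a, h a⟩
    · exact ⟨isCompact_empty, isOpen_empty, empty_subset _, hasShrinkingOfOrderLE_empty⟩
  refine hasShrinkingOfOrderLE_univ_of_nat (fun k => (hpiece k).1) (fun k => (hpiece k).2.1)
    (fun k => (hpiece k).2.2.1) (fun x => ?_) ?_ fun k => (hpiece k).2.2.2
  · obtain ⟨N, hN, hfin⟩ := hlf x
    refine ⟨N, hN, (hfin.image j).subset fun k ⟨y, hyU, hyN⟩ => ?_⟩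
    rcases hcases k with ⟨a, rfl, -, hUa⟩ | ⟨-, hUa⟩ <;> rw [hUa] at hyU
    · exact mem_image_of_mem j ⟨y, hyU, hyN⟩
    · exact hyU.elim
  · refine eq_univ_of_forall fun x => ?_
    obtain ⟨a, ha⟩ := mem_iUnion.1 (hcov ▸ mem_univ x)
    exact mem_iUnion.2 ⟨j a, by rwa [show K' (j a) = K a from hj.extend_apply _ _ _]⟩

end Iteration

theorem hasShrinkingOfOrderLE_univ_of_isInducing {X : Type*} [TopologicalSpace X] [T2Space X]
    [LocallyCompactSpace X] [SigmaCompactSpace X] {ι : Type*} {n : ℕ}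
    (h : ∀ x : X, ∃ O : Set X, IsOpen O ∧ x ∈ O ∧ ∃ e : O → (Fin n → ℝ), IsInducing e) :
    HasShrinkingOfOrderLE ι (univ : Set X) n := by
  choose O hO hxO e he using h
  have hB : ∀ x, (𝓝 x).HasBasis
      (fun s => ((x ∈ s ∧ IsOpen s) ∧ IsCompact (closure s)) ∧ s ⊆ O x) id := fun x =>
    ((nhds_basis_opens x).restrict fun s ⟨hxs, hs⟩ => by
      obtain ⟨t, ht, hxt, hts, htc⟩ := exists_open_between_and_isCompact_closure
        isCompact_singleton hs (singleton_subset_iff.2 hxs)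
      exact ⟨t, ⟨singleton_subset_iff.1 hxt, ht⟩, htc, subset_closure.trans hts⟩).restrict_subset
      ((hO x).mem_nhds (hxO x))
  obtain ⟨α, c, r, hr, hrcov, hlf⟩ := refinement_of_locallyCompact_sigmaCompact_of_nhds_basis hB
  obtain ⟨v, hvcov, -, hvr⟩ := exists_subset_iUnion_closure_subset isClosed_univ
    (fun a => (hr a).1.1.2) (fun x _ => hlf.point_finite x) hrcov.ge
  have : Countable α := countable_univ_iff.1 (hlf.countable_univ fun a => ⟨c a, (hr a).1.1.1⟩)
  have hvc : ∀ a, IsCompact (closure (v a)) := fun a =>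
    (hr a).1.2.of_isClosed_subset isClosed_closure ((hvr a).trans subset_closure)
  exact hasShrinkingOfOrderLE_univ_of_countable hvc (fun a => (hr a).1.1.2) hvr hlf
    (univ_subset_iff.1 (hvcov.trans (iUnion_mono fun a => subset_closure)))
    fun a => (hvc a).hasShrinkingOfOrderLE_of_isInducing (hO (c a)) (he (c a))
      ((hvr a).trans (hr a).2)

theorem topDimLE_of_forall_hasShrinkingOfOrderLE {X : Type*} [TopologicalSpace X] {m : ℕ}
    (h : ∀ 𝒰 : Set (Set X), HasShrinkingOfOrderLE 𝒰 (univ : Set X) m) : TopDimLE X m := by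
  intro 𝒰 h𝒰o h𝒰
  obtain ⟨W, hWo, hWU, hW, hWord⟩ := h 𝒰 (fun U => U.1) (fun U => h𝒰o U.1 U.2)
    (by rw [← sUnion_eq_iUnion, h𝒰])
  refine ⟨range W, forall_mem_range.2 hWo, ?_, forall_mem_range.2 fun U => ⟨U.1, U.2, hWU U⟩,
    hWord.orderAtMost_range⟩
  rw [sUnion_range]
  exact univ_subset_iff.1 hW

theorem isClosed_halfSpace (n : ℕ) : IsClosed (HalfSpace n) := by
  simp only [HalfSpace, ofPred_forall]
  exact isClosed_iInter fun i => isClosed_iInter fun _ => isClosed_le continuous_const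
    (continuous_apply i)

theorem IsTopManifold.weaklyLocallyCompactSpace {n : ℕ} {M : Type*} [TopologicalSpace M]
    (hM : IsTopManifold n M) : WeaklyLocallyCompactSpace M := by
  refine ⟨fun x => ?_⟩
  obtain ⟨U, hU, hxU, s, hs, ⟨φ⟩⟩ := hM.2.2 x
  have : LocallyCompactSpace s := by
    rcases hs with hs | ⟨t, ht, rfl⟩
    · exact hs.isLocallyClosed.locallyCompactSpace
    · exact (ht.isLocallyClosed.inter (isClosed_halfSpace n).isLocallyClosed).locallyCompactSpace
  have : LocallyCompactSpace U := φ.locallyCompactSpace_iff.2 ‹_›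
  obtain ⟨K, hK, hKx⟩ := exists_compact_mem_nhds (⟨x, hxU⟩ : U)
  exact ⟨_, hK.image continuous_subtype_val, hU.isOpenEmbedding_subtypeVal.image_mem_nhds.2 hKx⟩

/-- Every topological `n`-manifold has covering dimension at most `n`. -/
theorem statement2 (n : ℕ) (M : Type) [TopologicalSpace M] (hM : IsTopManifold n M) :
    TopDimLE M n := by
  obtain ⟨_, _, hchart⟩ := id hM
  have := hM.weaklyLocallyCompactSpace
  have : LocallyCompactSpace M := WeaklyLocallyCompactSpace.locallyCompactSpace
  refine topDimLE_of_forall_hasShrinkingOfOrderLE fun _ =>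
    hasShrinkingOfOrderLE_univ_of_isInducing fun x => ?_
  obtain ⟨O, hO, hxO, s, -, ⟨φ⟩⟩ := hchart x
  exact ⟨O, hO, hxO, _, IsInducing.subtypeVal.comp φ.isInducing⟩
end

section
/- Let X be a topological space with X = X₁ ∪ X₂ for closed finite-dimensional subspaces X₁, X₂ ⊆ X. Then X is finite-dimensional and dim X = max{dim X₁, dim X₂}. -/
/-- `X` is finite-dimensional: some `m` bounds its topological dimension. -/
def FiniteDim (X : Type*) [TopologicalSpace X] : Prop := ∃ m, TopDimLE X m

/-- The topological dimension of `X`: the least `m` such that every open cover of `X`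
has an open refinement of order at most `m` (junk value `0` if no such `m` exists). -/
noncomputable def topDim (X : Type*) [TopologicalSpace X] : ℕ := sInf {m | TopDimLE X m}

/-!
Closed subspaces inherit `TopDimLE`, which gives `max (dim X₁) (dim X₂) ≤ dim X`. Conversely,
given an open cover `𝒰` of `X`, extend a refinement of order `≤ m` of its trace on `X₁` to open
sets of `X` and add the sets `U \ X₁`: this is an open refinement `𝒲₁` of `𝒰` of order `≤ m` at
the points of `X₁`. Doing the same on `X₂` for `𝒲₁` gives `𝒲₂`. Finally assign to every member of
`𝒲₂` a member of `𝒲₁` containing it and replace each member of `𝒲₁` by the union of the members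
of `𝒲₂` assigned to it. At every point the order of this amalgamation is bounded both by that of
`𝒲₁` and by that of `𝒲₂`, hence by `m` everywhere since `X = X₁ ∪ X₂`.
-/

open Set

variable {X Y : Type*}

def OrderAtMostAt (𝒜 : Set (Set X)) (m : ℕ) (x : X) : Prop :=
  ∀ 𝒮 : Finset (Set X), (∀ A ∈ 𝒮, A ∈ 𝒜 ∧ x ∈ A) → 𝒮.card ≤ m + 1

theorem OrderAtMostAt.of_subset_image {𝒱 : Set (Set Y)} {𝒲 : Set (Set X)} {m : ℕ} {y : Y}
    {x : X} (h : OrderAtMostAt 𝒱 m y) (g : Set Y → Set X)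
    (hg : {W ∈ 𝒲 | x ∈ W} ⊆ g '' {V ∈ 𝒱 | y ∈ V}) : OrderAtMostAt 𝒲 m x := by
  classical
  intro 𝒮 h𝒮
  choose! φ hφ hgφ using fun W hW => hg (h𝒮 W hW)
  calc 𝒮.card ≤ (𝒮.image φ).card :=
        Finset.card_le_card_of_injOn φ (fun W hW => Finset.mem_image_of_mem φ hW)
          fun W hW W' hW' hWW' => by rw [← hgφ W hW, ← hgφ W' hW', hWW']
    _ ≤ m + 1 := h _ fun V hV => by
        obtain ⟨W, hW, rfl⟩ := Finset.mem_image.mp hV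
        exact hφ W hW

theorem IsOpen.exists_open_extension_subset [TopologicalSpace X] {A : Set X} {V : Set A}
    (hV : IsOpen V) {U : Set X} (hU : IsOpen U) (hVU : V ⊆ Subtype.val ⁻¹' U) :
    ∃ E : Set X, IsOpen E ∧ E ⊆ U ∧ Subtype.val ⁻¹' E = V := by
  obtain ⟨E, hE, rfl⟩ := isOpen_induced_iff.mp hV
  exact ⟨E ∩ U, hE.inter hU, inter_subset_right, by rwa [preimage_inter, inter_eq_left]⟩

theorem sUnion_image_preimage (f : Y → X) (𝒰 : Set (Set X)) :
    ⋃₀ (preimage f '' 𝒰) = f ⁻¹' ⋃₀ 𝒰 := by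
  rw [sUnion_image, preimage_sUnion]

section TopDimLE

variable [TopologicalSpace X] {m : ℕ}

theorem TopDimLE.mono {n : ℕ} (h : TopDimLE X m) (hmn : m ≤ n) : TopDimLE X n := by
  intro 𝒰 ho hc
  obtain ⟨𝒱, hVo, hVc, hVr, hVord⟩ := h 𝒰 ho hc
  exact ⟨𝒱, hVo, hVc, hVr, fun x 𝒮 h𝒮 => (hVord x 𝒮 h𝒮).trans (by omega)⟩

theorem topDimLE_iff_topDim_le (h : FiniteDim X) : TopDimLE X m ↔ topDim X ≤ m :=
  ⟨fun hm => Nat.sInf_le hm, TopDimLE.mono (Nat.sInf_mem h)⟩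

theorem TopDimLE.subtype_of_isClosed {A : Set X} (hA : IsClosed A) (h : TopDimLE X m) :
    TopDimLE A m := by
  intro 𝒰 ho hc
  choose! e he_open he_trace using fun U hU => isOpen_induced_iff.mp (ho U hU)
  have hcover : ⋃₀ insert Aᶜ (e '' 𝒰) = univ := by
    refine eq_univ_of_forall fun x => ?_
    by_cases hx : x ∈ A
    · obtain ⟨U, hU, hxU⟩ := hc.symm ▸ mem_univ (⟨x, hx⟩ : A)
      exact ⟨e U, Or.inr ⟨U, hU, rfl⟩, by rwa [← he_trace U hU] at hxU⟩
    · exact ⟨Aᶜ, Or.inl rfl, hx⟩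
  obtain ⟨𝒱, hVo, hVc, hVr, hVord⟩ := h _
    (by rintro _ (rfl | ⟨U, hU, rfl⟩); exacts [hA.isOpen_compl, he_open U hU]) hcover
  -- Empty traces are dropped: they need not lie in a member of `𝒰` when `A` and `𝒰` are empty.
  refine ⟨{T ∈ preimage Subtype.val '' 𝒱 | T.Nonempty}, ?_, ?_, ?_, ?_⟩
  · rintro _ ⟨⟨V, hV, rfl⟩, -⟩
    exact (hVo V hV).preimage continuous_subtype_val
  · refine eq_univ_of_forall fun x => ?_
    obtain ⟨V, hV, hxV⟩ := hVc.symm ▸ mem_univ (x : X)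
    exact ⟨_, ⟨⟨V, hV, rfl⟩, x, hxV⟩, hxV⟩
  · rintro _ ⟨⟨V, hV, rfl⟩, y, hy⟩
    obtain ⟨W, rfl | ⟨U, hU, rfl⟩, hVW⟩ := hVr V hV
    · exact absurd y.2 (hVW hy)
    · exact ⟨U, hU, he_trace U hU ▸ preimage_mono hVW⟩
  · refine fun x => OrderAtMostAt.of_subset_image (hVord x) (preimage Subtype.val) ?_
    rintro _ ⟨⟨⟨V, hV, rfl⟩, -⟩, hx⟩
    exact ⟨V, ⟨hV, hx⟩, rfl⟩

theorem TopDimLE.exists_refinement_orderAtMostAt {A : Set X} (hA : IsClosed A)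
    (h : TopDimLE A m) {𝒰 : Set (Set X)} (ho : ∀ U ∈ 𝒰, IsOpen U) (hc : ⋃₀ 𝒰 = univ) :
    ∃ 𝒲 : Set (Set X), (∀ W ∈ 𝒲, IsOpen W) ∧ ⋃₀ 𝒲 = univ ∧ (∀ W ∈ 𝒲, ∃ U ∈ 𝒰, W ⊆ U) ∧
      ∀ x ∈ A, OrderAtMostAt 𝒲 m x := by
  obtain ⟨𝒱, hVo, hVc, hVr, hVord⟩ := h (preimage Subtype.val '' 𝒰)
    (by rintro _ ⟨U, hU, rfl⟩; exact (ho U hU).preimage continuous_subtype_val)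
    (by rw [sUnion_image_preimage, hc, preimage_univ])
  have hext : ∀ V ∈ 𝒱, ∃ E : Set X, IsOpen E ∧ (∃ U ∈ 𝒰, E ⊆ U) ∧ Subtype.val ⁻¹' E = V := by
    intro V hV
    obtain ⟨_, ⟨U, hU, rfl⟩, hVU⟩ := hVr V hV
    obtain ⟨E, hE, hEU, hEV⟩ := (hVo V hV).exists_open_extension_subset (ho U hU) hVU
    exact ⟨E, hE, ⟨U, hU, hEU⟩, hEV⟩
  choose! s hs_open hs_sub hs_trace using hext
  refine ⟨s '' 𝒱 ∪ (· \ A) '' 𝒰, ?_, ?_, ?_, ?_⟩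
  · rintro _ (⟨V, hV, rfl⟩ | ⟨U, hU, rfl⟩)
    exacts [hs_open V hV, (ho U hU).sdiff hA]
  · refine eq_univ_of_forall fun x => ?_
    by_cases hx : x ∈ A
    · obtain ⟨V, hV, hxV⟩ := hVc.symm ▸ mem_univ (⟨x, hx⟩ : A)
      exact ⟨s V, Or.inl ⟨V, hV, rfl⟩, by rwa [← hs_trace V hV] at hxV⟩
    · obtain ⟨U, hU, hxU⟩ := hc.symm ▸ mem_univ x
      exact ⟨U \ A, Or.inr ⟨U, hU, rfl⟩, hxU, hx⟩
  · rintro _ (⟨V, hV, rfl⟩ | ⟨U, hU, rfl⟩)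
    exacts [hs_sub V hV, ⟨U, hU, sdiff_subset⟩]
  · refine fun x hx => OrderAtMostAt.of_subset_image (hVord ⟨x, hx⟩) s ?_
    rintro _ ⟨⟨V, hV, rfl⟩ | ⟨U, hU, rfl⟩, hxW⟩
    · exact ⟨V, ⟨hV, by rwa [← hs_trace V hV]⟩, rfl⟩
    · exact absurd hx hxW.2

theorem exists_amalgamation {𝒲 𝒲' : Set (Set X)} (hopen : ∀ W' ∈ 𝒲', IsOpen W')
    (href : ∀ W' ∈ 𝒲', ∃ W ∈ 𝒲, W' ⊆ W) :
    ∃ 𝒢 : Set (Set X), (∀ G ∈ 𝒢, IsOpen G) ∧ ⋃₀ 𝒢 = ⋃₀ 𝒲' ∧ (∀ G ∈ 𝒢, ∃ W ∈ 𝒲, G ⊆ W) ∧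
      ∀ x, OrderAtMostAt 𝒲 m x ∨ OrderAtMostAt 𝒲' m x → OrderAtMostAt 𝒢 m x := by
  choose! a ha_mem ha_sub using href
  set G : Set X → Set X := fun W => ⋃₀ {W' ∈ 𝒲' | a W' = W}
  have hG_sub : ∀ W, G W ⊆ W := by
    rintro W x ⟨W', ⟨hW', rfl⟩, hx⟩
    exact ha_sub W' hW' hx
  refine ⟨G '' 𝒲, ?_, ?_, ?_, ?_⟩
  · rintro _ ⟨W, -, rfl⟩
    exact isOpen_sUnion fun W' hW' => hopen W' hW'.1
  · refine Subset.antisymm ?_ ?_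
    · rintro x ⟨_, ⟨W, -, rfl⟩, W', ⟨hW', -⟩, hx⟩
      exact ⟨W', hW', hx⟩
    · rintro x ⟨W', hW', hx⟩
      exact ⟨G (a W'), ⟨a W', ha_mem W' hW', rfl⟩, W', ⟨hW', rfl⟩, hx⟩
  · rintro _ ⟨W, hW, rfl⟩
    exact ⟨W, hW, hG_sub W⟩
  · rintro x (hx | hx)
    · refine hx.of_subset_image G ?_
      rintro _ ⟨⟨W, hW, rfl⟩, hxW⟩
      exact ⟨W, ⟨hW, hG_sub W hxW⟩, rfl⟩
    · refine hx.of_subset_image (G ∘ a) ?_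
      rintro _ ⟨⟨W, -, rfl⟩, W', ⟨hW', rfl⟩, hxW'⟩
      exact ⟨W', ⟨hW', hxW'⟩, rfl⟩

theorem TopDimLE.of_isClosed_union {X₁ X₂ : Set X} (h₁ : IsClosed X₁) (h₂ : IsClosed X₂)
    (hu : X₁ ∪ X₂ = univ) (d₁ : TopDimLE X₁ m) (d₂ : TopDimLE X₂ m) : TopDimLE X m := by
  intro 𝒰 ho hc
  obtain ⟨𝒲₁, ho₁, hc₁, hr₁, hord₁⟩ := d₁.exists_refinement_orderAtMostAt h₁ ho hc
  obtain ⟨𝒲₂, ho₂, hc₂, hr₂, hord₂⟩ := d₂.exists_refinement_orderAtMostAt h₂ ho₁ hc₁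
  obtain ⟨𝒢, hoG, hcG, hrG, hordG⟩ := exists_amalgamation ho₂ hr₂
  refine ⟨𝒢, hoG, hcG.trans hc₂, fun G hG => ?_, fun x => hordG x ?_⟩
  · obtain ⟨W, hW, hGW⟩ := hrG G hG
    obtain ⟨U, hU, hWU⟩ := hr₁ W hW
    exact ⟨U, hU, hGW.trans hWU⟩
  · rcases hu.symm ▸ mem_univ x with hx | hx
    exacts [Or.inl (hord₁ x hx), Or.inr (hord₂ x hx)]

theorem topDimLE_iff_of_isClosed_union {X₁ X₂ : Set X} (h₁ : IsClosed X₁) (h₂ : IsClosed X₂)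
    (hu : X₁ ∪ X₂ = univ) : TopDimLE X m ↔ TopDimLE X₁ m ∧ TopDimLE X₂ m :=
  ⟨fun h => ⟨h.subtype_of_isClosed h₁, h.subtype_of_isClosed h₂⟩,
    fun ⟨d₁, d₂⟩ => .of_isClosed_union h₁ h₂ hu d₁ d₂⟩

end TopDimLE

/-- If `X = X₁ ∪ X₂` for closed finite-dimensional subspaces `X₁, X₂`, then `X` is
finite-dimensional and `dim X = max (dim X₁) (dim X₂)`. -/
theorem statement5 (X : Type) [TopologicalSpace X] (X₁ X₂ : Set X)
    (h₁ : IsClosed X₁) (h₂ : IsClosed X₂)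
    (hfd₁ : FiniteDim ↥X₁) (hfd₂ : FiniteDim ↥X₂)
    (hunion : X₁ ∪ X₂ = Set.univ) :
    FiniteDim X ∧ topDim X = max (topDim ↥X₁) (topDim ↥X₂) := by
  have hX : ∀ m, TopDimLE X m ↔ max (topDim X₁) (topDim X₂) ≤ m := fun m => by
    rw [topDimLE_iff_of_isClosed_union h₁ h₂ hunion, topDimLE_iff_topDim_le hfd₁,
      topDimLE_iff_topDim_le hfd₂, max_le_iff]
  have hfd : FiniteDim X := ⟨_, (hX _).mpr le_rfl⟩
  exact ⟨hfd, eq_of_forall_ge_iff fun m => (topDimLE_iff_topDim_le hfd).symm.trans (hX m)⟩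
end

section
/- Let x₁,…,x_m ∈ ℝ^N be distinct points and let r > 0. Then there exist distinct points y₁,…,y_m ∈ ℝ^N such that ‖x_i − y_i‖_∞ < r for all 1 ≤ i ≤ m, and {y₁,…,y_m} is in general position, i.e. every subset S ⊆ {y₁,…,y_m} with card(S) ≤ N+1 is affinely independent. -/
open Finset

/-! The points are perturbed one at a time. The new point `y a` is chosen within `r` of `x a` and
off the affine spans of all sets of at most `dim E` previously chosen points; these are proper
affine subspaces, so their union is a null set and its complement is dense. A point outside the
affine span of an affinely independent family extends it to an affinely independent family, so
general position is preserved. In positive dimension general position separates any two points;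
in dimension zero there is at most one point. -/

section AffineSpan

variable {k V P ι : Type*} [Field k] [AddCommGroup V] [Module k V] [AddTorsor V P]

theorem affineSpan_ne_top_of_card_le_finrank {s : Finset P} (hs : #s ≤ Module.finrank k V) :
    affineSpan k (s : Set P) ≠ ⊤ := by
  classical
  intro htop
  have hne : s.Nonempty := by
    exact_mod_cast AffineSubspace.nonempty_of_affineSpan_eq_top k V P htop
  have hrank := finrank_vectorSpan_image_finset_le k id s (n := #s - 1)
    (Nat.succ_pred_eq_of_pos hne.card_pos).symm
  rw [Finset.image_id, AffineSubspace.vectorSpan_eq_top_of_affineSpan_eq_top k V P htop,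
    finrank_top] at hrank
  have := hne.card_pos
  omega

theorem affineIndependent_subtype_insert_of_notMem_affineSpan {p : ι → P} {a : ι}
    {S : Finset ι} [DecidableEq ι] (hS : AffineIndependent k fun i : S => p i)
    (hpa : p a ∉ affineSpan k (p '' S)) :
    AffineIndependent k fun i : (insert a S : Finset ι) => p i := by
  set i₀ : (insert a S : Finset ι) := ⟨a, mem_insert_self a S⟩
  have mem_of_ne : ∀ i : (insert a S : Finset ι), i ≠ i₀ → (i : ι) ∈ S := fun i hi =>
    (mem_insert.1 i.2).resolve_left fun h => hi (Subtype.ext h)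
  refine AffineIndependent.affineIndependent_of_notMem_span (i := i₀) ?_ ?_
  · let e : { i // i ≠ i₀ } ↪ S :=
      ⟨fun i => ⟨i.1, mem_of_ne i.1 i.2⟩, fun i j h => Subtype.ext (Subtype.ext (by
        simpa using congrArg Subtype.val h))⟩
    exact hS.comp_embedding e
  · refine fun h => hpa (affineSpan_mono k ?_ h)
    rintro _ ⟨i, hi, rfl⟩
    exact ⟨i, mem_of_ne i hi, rfl⟩

end AffineSpan

section GeneralPosition

variable (k : Type*) {V P ι : Type*} [Field k] [AddCommGroup V] [Module k V] [AddTorsor V P]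

def InGeneralPositionOn (n : ℕ) (p : ι → P) (s : Finset ι) : Prop :=
  ∀ S ⊆ s, #S ≤ n + 1 → AffineIndependent k fun i : S => p i

variable {k}

theorem inGeneralPositionOn_empty (n : ℕ) (p : ι → P) : InGeneralPositionOn k n p ∅ := by
  intro S hS _
  rw [subset_empty.1 hS]
  exact affineIndependent_of_subsingleton k _

theorem InGeneralPositionOn.update_insert [DecidableEq ι] {n : ℕ} {p : ι → P} {s : Finset ι}
    {a : ι} {z : P} (h : InGeneralPositionOn k n p s) (ha : a ∉ s)
    (hz : ∀ T ⊆ s, #T ≤ n → z ∉ affineSpan k (p '' T)) :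
    InGeneralPositionOn k n (Function.update p a z) (insert a s) := by
  have update_eqOn : ∀ T ⊆ s, Set.EqOn (Function.update p a z) p T := fun T hT i hi =>
    Function.update_of_ne (fun hia : i = a => ha (hia ▸ hT hi)) _ _
  intro S hS hcard
  by_cases haS : a ∈ S
  · have hsub : S.erase a ⊆ s := fun i hi =>
      (mem_insert.1 (hS (mem_of_mem_erase hi))).resolve_left (ne_of_mem_erase hi)
    have hcard' : #(S.erase a) ≤ n := by
      have := card_erase_add_one haS
      omega
    rw [← insert_erase haS]
    refine affineIndependent_subtype_insert_of_notMem_affineSpan ?_ ?_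
    · convert h _ hsub (hcard'.trans n.le_succ) using 2 with i
      exact update_eqOn _ hsub i.2
    · rw [Function.update_self, (update_eqOn _ hsub).image_eq]
      exact hz _ hsub hcard'
  · have hsub : S ⊆ s := (subset_insert_iff_of_notMem haS).1 hS
    convert h S hsub hcard using 2 with i
    exact update_eqOn S hsub i.2

theorem InGeneralPositionOn.injOn {n : ℕ} {p : ι → P} {s : Finset ι}
    (h : InGeneralPositionOn k n p s) (hn : 1 ≤ n) : Set.InjOn p s := by
  classical
  intro i hi j hj hij
  have hpair := h {i, j} (insert_subset hi (singleton_subset_iff.2 hj))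
    (card_le_two.trans (by omega))
  exact congrArg Subtype.val (hpair.injective (a₁ := ⟨i, mem_insert_self i _⟩)
    (a₂ := ⟨j, mem_insert_of_mem (mem_singleton_self j)⟩) hij)

end GeneralPosition

section Perturbation

open MeasureTheory

variable {E : Type*} [NormedAddCommGroup E] [NormedSpace ℝ E] [FiniteDimensional ℝ E]

theorem dense_setOf_forall_notMem_affineSubspace {ι : Type*} {S : Set ι} (hS : S.Countable)
    (A : ι → AffineSubspace ℝ E) (hA : ∀ i ∈ S, A i ≠ ⊤) :
    Dense {y | ∀ i ∈ S, y ∉ A i} := by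
  let : MeasurableSpace E := borel E
  have : BorelSpace E := ⟨rfl⟩
  refine Measure.dense_of_ae (μ := Measure.addHaar) ((ae_ball_iff hS).2 fun i hi => ?_)
  exact measure_eq_zero_iff_ae_notMem.1 (Measure.addHaar_affineSubspace _ _ (hA i hi))

theorem exists_perturbation_inGeneralPositionOn {ι : Type*} (x : ι → E) {r : ℝ} (hr : 0 < r)
    (s : Finset ι) :
    ∃ y : ι → E, (∀ i, ‖x i - y i‖ < r) ∧
      InGeneralPositionOn ℝ (Module.finrank ℝ E) y s := by
  classical
  induction s using Finset.induction_on with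
  | empty => exact ⟨x, fun i => by simpa using hr, inGeneralPositionOn_empty _ x⟩
  | insert a s ha ih =>
    obtain ⟨y, hclose, hgp⟩ := ih
    have hdense := dense_setOf_forall_notMem_affineSubspace
      (S := {T : Finset ι | T ⊆ s ∧ #T ≤ Module.finrank ℝ E})
      ((s.powerset.finite_toSet.subset fun T hT => mem_powerset.2 hT.1).countable)
      (fun T => affineSpan ℝ (y '' T)) fun T hT => by
        rw [← coe_image]
        exact affineSpan_ne_top_of_card_le_finrank (card_image_le.trans hT.2)
    obtain ⟨z, hz, havoid⟩ := Metric.dense_iff.1 hdense (x a) r hr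
    refine ⟨Function.update y a z, fun i => ?_,
      hgp.update_insert ha fun T hT hcard => havoid T ⟨hT, hcard⟩⟩
    rcases eq_or_ne i a with rfl | hia
    · rw [Function.update_self, ← dist_eq_norm, dist_comm]
      exact hz
    · rw [Function.update_of_ne hia]
      exact hclose i

end Perturbation

/-- Distinct points `x₁, …, x_m` of `ℝ^N` can be perturbed by less than `r` (in the sup
norm) to distinct points `y₁, …, y_m` in general position: every subset of
`{y₁, …, y_m}` of cardinality at most `N + 1` is affinely independent. -/
theorem statement13 (N m : ℕ) (x : Fin m → Fin N → ℝ) (hx : Function.Injective x)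
    (r : ℝ) (hr : 0 < r) :
    ∃ y : Fin m → Fin N → ℝ, Function.Injective y ∧
      (∀ i, ‖x i - y i‖ < r) ∧
      ∀ S : Finset (Fin m), S.card ≤ N + 1 →
        AffineIndependent ℝ fun i : ↥S => y i.1 := by
  obtain ⟨y, hclose, hgp⟩ := exists_perturbation_inGeneralPositionOn x hr univ
  rw [Module.finrank_fin_fun] at hgp
  refine ⟨y, ?_, hclose, fun S hS => hgp S (subset_univ S) hS⟩
  rcases N.eq_zero_or_pos with rfl | hN
  · rwa [Subsingleton.elim y x]
  · simpa using hgp.injOn hN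
end

section
/- Every open subset of an ANR is again an ANR. -/
/-- `X` is an Absolute Neighbourhood Retract: every continuous map to `X` from a closed
subset `A` of a paracompact (Hausdorff) space `P` extends continuously to an open
neighbourhood of `A` in `P`. -/
def IsANR (X : Type u) [TopologicalSpace X] : Prop :=
  ∀ (P : Type u) [TopologicalSpace P] [ParacompactSpace P] [T2Space P]
    (A : Set P), IsClosed A → ∀ f : A → X, Continuous f →
      ∃ (W : Set P) (_ : IsOpen W) (hAW : A ⊆ W) (F : W → X), Continuous F ∧
        ∀ (x : P) (hx : x ∈ A), F ⟨x, hAW hx⟩ = f ⟨x, hx⟩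

theorem IsOpen.isOpen_setOf_exists_mem_preimage {P X : Type*} [TopologicalSpace P]
    [TopologicalSpace X] {W : Set P} (hW : IsOpen W) {F : W → X} (hF : Continuous F)
    {U : Set X} (hU : IsOpen U) : IsOpen {x | ∃ h : x ∈ W, F ⟨x, h⟩ ∈ U} := by
  convert hW.isOpenMap_subtype_val _ (hF.isOpen_preimage U hU) using 1
  ext x
  simp

/-- Every open subset of an ANR is again an ANR. -/
theorem statement18 (X : Type) [TopologicalSpace X] (hX : IsANR X)
    (U : Set X) (hU : IsOpen U) : IsANR ↥U := by
  intro P _ _ _ A hA f hf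
  obtain ⟨W, hW, hAW, F, hF, hFA⟩ := hX P A hA (fun a => (f a : X)) hf.subtype_val
  let W' : Set P := {x | ∃ h : x ∈ W, F ⟨x, h⟩ ∈ U}
  have hW'W : W' ⊆ W := fun _ hx => hx.fst
  have hAW' : A ⊆ W' := fun x hx => ⟨hAW hx, by rw [hFA x hx]; exact (f ⟨x, hx⟩).2⟩
  refine ⟨W', hW.isOpen_setOf_exists_mem_preimage hF hU, hAW',
    fun x => ⟨F (Set.inclusion hW'W x), x.2.snd⟩,
    (hF.comp (continuous_inclusion hW'W)).subtype_mk _, fun x hx => Subtype.ext (hFA x hx)⟩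
end

section
/- Every topological n-manifold M is an ANR. -/
open Set Filter Topology Function

universe u

theorem ContinuousOn.piecewise_of_isClosed {α β : Type*} [TopologicalSpace α]
    [TopologicalSpace β] {s C D : Set α} {f g : α → β} [∀ x, Decidable (x ∈ C)]
    (hC : IsClosed C) (hD : IsClosed D) (hs : s ⊆ C ∪ D) (hf : ContinuousOn f (s ∩ C))
    (hg : ContinuousOn g (s ∩ D)) (hfg : EqOn f g (s ∩ C ∩ D)) :
    ContinuousOn (C.piecewise f g) s := by
  have hC' : ContinuousOn (C.piecewise f g) (s ∩ C) :=
    hf.congr fun x hx => piecewise_eq_of_mem _ _ _ hx.2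
  have hD' : ContinuousOn (C.piecewise f g) (s ∩ D) := hg.congr fun x hx => by
    by_cases hxC : x ∈ C
    · rw [piecewise_eq_of_mem _ _ _ hxC, hfg ⟨⟨hx.1, hxC⟩, hx.2⟩]
    · exact piecewise_eq_of_notMem _ _ _ hxC
  intro x hx
  have within : ∀ E : Set α, IsClosed E → ContinuousOn (C.piecewise f g) (s ∩ E) →
      ContinuousWithinAt (C.piecewise f g) (s ∩ E) x := fun E hE hE' => by
    by_cases hxE : x ∈ E
    · exact hE' x ⟨hx, hxE⟩
    · exact continuousWithinAt_of_notMem_closure fun h =>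
        hxE (hE.closure_subset (closure_mono inter_subset_right h))
  exact ((within C hC hC').union (within D hD hD')).mono fun y hy =>
    (hs hy).imp (⟨hy, ·⟩) (⟨hy, ·⟩)

theorem ContinuousOn.exists_isClosed_cover_mapsTo {X Y : Type*} [TopologicalSpace X]
    [NormalSpace X] [TopologicalSpace Y] {A : Set X} {f : X → Y} {U V : Set Y}
    (hf : ContinuousOn f A) (hA : IsClosed A) (hU : IsOpen U) (hV : IsOpen V)
    (hfUV : MapsTo f A (U ∪ V)) :
    ∃ P₁ P₂ : Set X, IsClosed P₁ ∧ IsClosed P₂ ∧ (∀ p, p ∈ P₁ ∨ p ∈ P₂) ∧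
      MapsTo f (A ∩ P₁) U ∧ MapsTo f (A ∩ P₂) V := by
  obtain ⟨u, hu0, hu1, -⟩ := exists_continuous_zero_one_of_isClosed
    (hf.preimage_isClosed_of_isClosed hA hV.isClosed_compl)
    (hf.preimage_isClosed_of_isClosed hA hU.isClosed_compl)
    (disjoint_left.2 fun p ⟨hpA, hpV⟩ ⟨_, hpU⟩ => (hfUV hpA).elim hpU hpV)
  refine ⟨{p | u p ≤ 1 / 2}, {p | 1 / 2 ≤ u p}, isClosed_le u.continuous continuous_const,
    isClosed_le continuous_const u.continuous,
    fun p => le_total (u p) (1 / 2), fun p ⟨hpA, hp⟩ => ?_, fun p ⟨hpA, hp⟩ => ?_⟩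
  · by_contra hpU
    norm_num [hu1 ⟨hpA, hpU⟩] at hp
  · by_contra hpV
    norm_num [hu0 ⟨hpA, hpV⟩] at hp

theorem exists_pairwise_disjoint_isOpen_superset {X ι : Type*} [TopologicalSpace X]
    [ParacompactSpace X] [T2Space X] {A : ι → Set X}
    (hdisc : ∀ x, ∃ N ∈ 𝓝 x, {i | (N ∩ A i).Nonempty}.Subsingleton) :
    ∃ G : ι → Set X, (∀ i, IsOpen (G i)) ∧ (∀ i, A i ⊆ G i) ∧ Pairwise (Disjoint on G) := by
  have hclosed : ∀ x, ∃ N ∈ 𝓝 x, IsClosed N ∧ {i | (N ∩ A i).Nonempty}.Subsingleton := by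
    intro x
    obtain ⟨N, hN, hNA⟩ := hdisc x
    obtain ⟨N', hN', hN'c, hN'N⟩ := exists_mem_nhds_isClosed_subset hN
    exact ⟨N', hN', hN'c, hNA.anti fun i hi => hi.mono (inter_subset_inter_left _ hN'N)⟩
  choose N hN hNc hNA using hclosed
  obtain ⟨v, hvo, hvcov, hvlf, hvN⟩ := precise_refinement (fun x => interior (N x))
    (fun _ => isOpen_interior)
    (iUnion_eq_univ_iff.2 fun x => ⟨x, mem_interior_iff_mem_nhds.2 (hN x)⟩)
  have hvA : ∀ x, {i | (closure (v x) ∩ A i).Nonempty}.Subsingleton := fun x =>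
    (hNA x).anti fun i hi => hi.mono <| inter_subset_inter_left _ <|
      closure_minimal ((hvN x).trans interior_subset) (hNc x)
  refine ⟨fun i => (⋃ x : {x // Disjoint (closure (v x)) (A i)}, closure (v x))ᶜ,
    fun i => ?_, fun i a ha hmem => ?_, fun i j hij => disjoint_left.2 fun p hpi hpj => ?_⟩
  · exact ((hvlf.closure.comp_injective Subtype.val_injective).isClosed_iUnion
      fun _ => isClosed_closure).isOpen_compl
  · obtain ⟨⟨x, hx⟩, hax⟩ := mem_iUnion.1 hmem
    exact disjoint_left.1 hx hax ha
  · obtain ⟨x, hpx⟩ := iUnion_eq_univ_iff.1 hvcov p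
    have hmeet : ∀ k, p ∉ ⋃ x : {x // Disjoint (closure (v x)) (A k)}, closure (v x) →
        (closure (v x) ∩ A k).Nonempty := fun k hk => by
      by_contra hne
      exact hk (mem_iUnion.2 ⟨⟨x, disjoint_iff_inter_eq_empty.2 (not_nonempty_iff_eq_empty.1 hne)⟩,
        subset_closure hpx⟩)
    exact hij (hvA x (hmeet i hpi) (hmeet j hpj))

theorem ContinuousOn.exists_pairwise_disjoint_isOpen_superset_preimage {X Y ι : Type*}
    [TopologicalSpace X] [ParacompactSpace X] [T2Space X] [TopologicalSpace Y] {A : Set X}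
    {f : X → Y} {S : ι → Set Y} (hf : ContinuousOn f A) (hA : IsClosed A)
    (hSo : ∀ i, IsOpen (S i)) (hd : Pairwise (Disjoint on S)) (hfS : MapsTo f A (⋃ i, S i)) :
    ∃ G : ι → Set X, (∀ i, IsOpen (G i)) ∧ (∀ i, A ∩ f ⁻¹' S i ⊆ G i) ∧
      Pairwise (Disjoint on G) := by
  refine exists_pairwise_disjoint_isOpen_superset fun p => ?_
  by_cases hp : p ∈ A
  · obtain ⟨i, hpi⟩ := mem_iUnion.1 (hfS hp)
    have hN := hf.preimage_isClosed_of_isClosed hA (hSo i).isClosed_compl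
    refine ⟨(A ∩ f ⁻¹' (S i)ᶜ)ᶜ, hN.isOpen_compl.mem_nhds fun h => h.2 hpi, ?_⟩
    have hNi : ∀ {j}, ((A ∩ f ⁻¹' (S i)ᶜ)ᶜ ∩ (A ∩ f ⁻¹' S j)).Nonempty → j = i :=
      fun ⟨q, hqN, hqA, hqj⟩ => by_contra fun hji =>
        disjoint_left.1 (hd hji) hqj (by_contra fun h => hqN ⟨hqA, h⟩)
    exact fun j hj k hk => (hNi hj).trans (hNi hk).symm
  · exact ⟨Aᶜ, hA.isOpen_compl.mem_nhds hp, fun _ ⟨_, hqN, hqA, _⟩ => absurd hqA hqN⟩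

theorem weaklyLocallyCompactSpace_of_forall_exists_isOpen {X : Type*} [TopologicalSpace X]
    (h : ∀ x : X, ∃ U : Set X, IsOpen U ∧ x ∈ U ∧ WeaklyLocallyCompactSpace U) :
    WeaklyLocallyCompactSpace X := by
  refine ⟨fun x => ?_⟩
  obtain ⟨U, hU, hxU, _⟩ := h x
  obtain ⟨K, hK, hKx⟩ := exists_compact_mem_nhds (⟨x, hxU⟩ : U)
  exact ⟨_, hK.image continuous_subtype_val, hU.isOpenEmbedding_subtypeVal.image_mem_nhds.2 hKx⟩

theorem IsANR.of_homeomorph {X Y : Type u} [TopologicalSpace X] [TopologicalSpace Y]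
    (e : X ≃ₜ Y) (h : IsANR X) : IsANR Y := by
  intro P _ _ _ A hA f hf
  obtain ⟨W, hW, hAW, F, hF, hFf⟩ := h P A hA (e.symm ∘ f) (e.symm.continuous.comp hf)
  exact ⟨W, hW, hAW, e ∘ F, e.continuous.comp hF, fun x hx => by simp [hFf x hx]⟩

section ANE

variable {M : Type u} [TopologicalSpace M]

/-- Absolute neighbourhood extensor for paracompact Hausdorff spaces, as a property of a subset
of `M`. The partial maps of the extension property are total maps `P → M` of which only the
values on `A`, resp. `W`, matter. -/
def IsANE (S : Set M) : Prop :=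
  ∀ (P : Type u) [TopologicalSpace P] [ParacompactSpace P] [T2Space P] {A : Set P} {f : P → M},
    IsClosed A → ContinuousOn f A → MapsTo f A S →
      ∃ W, IsOpen W ∧ A ⊆ W ∧ ∃ F : P → M, ContinuousOn F W ∧ MapsTo F W S ∧ EqOn F f A

theorem isANE_iff_isANR {S : Set M} : IsANE S ↔ IsANR S := by
  constructor
  · intro h P _ _ _ A hA f hf
    rcases isEmpty_or_nonempty A with hAe | ⟨⟨a₀⟩⟩
    · refine ⟨∅, isOpen_empty, by simp [Set.isEmpty_coe_sort.1 hAe], isEmptyElim,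
        continuous_of_discreteTopology, fun x hx => isEmptyElim (⟨x, hx⟩ : A)⟩
    set g : P → M := Function.extend Subtype.val (fun a => (f a : M)) fun _ => f a₀
    have hg : ∀ a : A, g a = f a := Subtype.val_injective.extend_apply _ _
    have hgA : ContinuousOn g A := by
      rw [continuousOn_iff_continuous_domRestrict]
      convert continuous_subtype_val.comp hf using 1
      exact funext hg
    obtain ⟨W, hW, hAW, F, hF, hFS, hFg⟩ := h P hA hgA fun a ha => by
      simpa only [hg ⟨a, ha⟩] using (f ⟨a, ha⟩).2
    exact ⟨W, hW, hAW, fun w => ⟨F w, hFS w.2⟩, hF.domRestrict.subtype_mk _,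
      fun x hx => Subtype.ext ((hFg hx).trans (hg ⟨x, hx⟩))⟩
  · intro h P _ _ _ A f hA hf hfS
    obtain ⟨W, hW, hAW, G, hG, hGf⟩ :=
      h P A hA (fun a => ⟨f a, hfS a.2⟩) (hf.domRestrict.subtype_mk _)
    set F : P → M := Function.extend Subtype.val (fun w => (G w : M)) f
    have hF : ∀ w : W, F w = G w := Subtype.val_injective.extend_apply _ _
    refine ⟨W, hW, hAW, F, ?_, fun w hw => ?_, fun x hx => ?_⟩
    · rw [continuousOn_iff_continuous_domRestrict]
      convert continuous_subtype_val.comp hG using 1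
      exact funext hF
    · simpa only [hF ⟨w, hw⟩] using (G ⟨w, hw⟩).2
    · simpa only [hF ⟨x, hAW hx⟩] using congrArg Subtype.val (hGf x hx)

theorem isANE_empty : IsANE (∅ : Set M) := fun _ _ _ _ _ f _ _ hfS =>
  ⟨∅, isOpen_empty, fun _ ha => (hfS ha).elim, f, continuousOn_empty f, mapsTo_empty f ∅,
    fun _ _ => rfl⟩

theorem IsANE.mono_of_isOpen {S S' : Set M} (h : IsANE S) (hS' : IsOpen S') (hS'S : S' ⊆ S) :
    IsANE S' := by
  intro P _ _ _ A f hA hf hfS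
  obtain ⟨W, hW, hAW, F, hF, -, hFf⟩ := h P hA hf (hfS.mono_right hS'S)
  refine ⟨W ∩ F ⁻¹' S', hF.isOpen_inter_preimage hW hS', fun a ha => ⟨hAW ha, ?_⟩, F,
    hF.mono inter_subset_left, fun p hp => hp.2, hFf⟩
  simpa only [mem_preimage, hFf ha] using hfS ha

theorem IsANE.exists_extension_of_isClosed {S : Set M} (hS : IsANE S) {P : Type u}
    [TopologicalSpace P] [ParacompactSpace P] [T2Space P] {C A : Set P} {f : P → M}
    (hC : IsClosed C) (hA : IsClosed A) (hAC : A ⊆ C) (hf : ContinuousOn f A)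
    (hfS : MapsTo f A S) :
    ∃ W, IsOpen W ∧ A ⊆ W ∧ ∃ F : P → M, ContinuousOn F (C ∩ W) ∧ MapsTo F (C ∩ W) S ∧
      EqOn F f A := by
  have : ParacompactSpace C := hC.isClosedEmbedding_subtypeVal.paracompactSpace
  obtain ⟨W', hW', hAW', F', hF', hF'S, hF'f⟩ := hS C (hA.preimage continuous_subtype_val)
    (hf.comp continuous_subtype_val.continuousOn fun _ h => h) fun _ h => hfS h
  obtain ⟨W, hW, rfl⟩ := isOpen_induced_iff.1 hW'
  set F : P → M := Function.extend Subtype.val F' f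
  have hF : ∀ c : C, F c = F' c := Subtype.val_injective.extend_apply F' f
  refine ⟨W, hW, fun a ha => hAW' (show (⟨a, hAC ha⟩ : C) ∈ _ from ha), F, ?_, ?_, ?_⟩
  · rw [← Subtype.image_preimage_coe, IsInducing.subtypeVal.continuousOn_image_iff]
    exact hF'.congr fun c _ => hF c
  · rw [← Subtype.image_preimage_coe]
    rintro _ ⟨c, hc, rfl⟩
    exact (hF c).symm ▸ hF'S hc
  · intro a ha
    exact (hF ⟨a, hAC ha⟩).trans (hF'f (show (⟨a, hAC ha⟩ : C) ∈ _ from ha))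

theorem isANE_inter_of_retraction {R t : Set M} [TietzeExtension.{u, u} M] {r : M → M}
    (hr : Continuous r) (hrR : ∀ y, r y ∈ R) (hRr : ∀ y ∈ R, r y = y) (ht : IsOpen t) :
    IsANE (t ∩ R) := by
  intro P _ _ _ A f hA hf hfS
  obtain ⟨g, hg⟩ := ContinuousMap.exists_restrict_eq hA ⟨A.domRestrict f, hf.domRestrict⟩
  have hrg : Continuous (r ∘ g) := hr.comp g.continuous
  have hrgf : EqOn (r ∘ g) f A := fun a ha => by
    have hga : g a = f a := congrArg (· ⟨a, ha⟩) hg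
    simp only [Function.comp_apply, hga, hRr _ (hfS ha).2]
  refine ⟨r ∘ g ⁻¹' t, ht.preimage hrg, fun a ha => ?_, r ∘ g, hrg.continuousOn,
    fun p hp => ⟨hp, hrR _⟩, hrgf⟩
  simpa only [mem_preimage, hrgf ha] using (hfS ha).1

theorem IsANE.exists_extension_near_inter {T : Set M} (hT : IsANE T) {P : Type u}
    [TopologicalSpace P] [ParacompactSpace P] [T2Space P] {A C : Set P} {f : P → M}
    (hA : IsClosed A) (hC : IsClosed C) (hf : ContinuousOn f A) (hfT : MapsTo f (A ∩ C) T) :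
    ∃ V Z, IsOpen V ∧ A ∩ C ⊆ V ∧ C ∩ V ⊆ Z ∧ Z ⊆ C ∧ IsClosed Z ∧
      ∃ h : P → M, ContinuousOn h (A ∪ Z) ∧ EqOn h f A ∧ MapsTo h Z T := by
  classical
  obtain ⟨W, hW, hACW, g, hg, hgT, hgf⟩ := hT.exists_extension_of_isClosed hC (hA.inter hC)
    inter_subset_right (hf.mono inter_subset_left) hfT
  obtain ⟨V, hV, hACV, hVW⟩ := normal_exists_closure_subset (hA.inter hC) hW hACW
  have hZW : C ∩ closure V ⊆ C ∩ W := inter_subset_inter_right _ hVW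
  have hZ : IsClosed (C ∩ closure V) := hC.inter isClosed_closure
  refine ⟨V, C ∩ closure V, hV, hACV, inter_subset_inter_right _ subset_closure,
    inter_subset_left, hZ, (C ∩ closure V).piecewise g f, ?_, fun p hp => ?_, fun p hp => ?_⟩
  · exact ContinuousOn.piecewise_of_isClosed hZ hA (union_comm A _).subset
      (hg.mono (inter_subset_right.trans hZW)) (hf.mono inter_subset_right)
      fun p hp => hgf ⟨hp.2, hp.1.2.1⟩
  · by_cases hpZ : p ∈ C ∩ closure V
    · rw [piecewise_eq_of_mem _ _ _ hpZ, hgf ⟨hp, hpZ.1⟩]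
    · exact piecewise_eq_of_notMem _ _ _ hpZ
  · rw [piecewise_eq_of_mem _ _ _ hp]
    exact hgT (hZW hp)

/-- Split the domain into closed `P₁`, `P₂` sent near `U` and near `V`; extend first over a
neighbourhood of `A ∩ P₁ ∩ P₂` in `P₁ ∩ P₂` into `U ∩ V`, then over `P₁` into `U` and over `P₂`
into `V`. The two extensions agree near `P₁ ∩ P₂`. -/
theorem IsANE.union {U V : Set M} (hUo : IsOpen U) (hVo : IsOpen V) (hU : IsANE U)
    (hV : IsANE V) : IsANE (U ∪ V) := by
  classical
  intro P _ _ _ A f hA hf hfUV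
  obtain ⟨P₁, P₂, hP₁, hP₂, hP, hfU, hfV⟩ := hf.exists_isClosed_cover_mapsTo hA hUo hVo hfUV
  obtain ⟨V₀, Z, hV₀, hAV₀, hV₀Z, hZP, hZ, h, hh, hhf, hhUV⟩ :=
    (hU.mono_of_isOpen (hUo.inter hVo) inter_subset_left).exists_extension_near_inter hA
      (hP₁.inter hP₂) hf fun p hp => ⟨hfU ⟨hp.1, hp.2.1⟩, hfV ⟨hp.1, hp.2.2⟩⟩
  obtain ⟨W₁, hW₁, hBW₁, F₁, hF₁, hF₁U, hF₁h⟩ := hU.exists_extension_of_isClosed hP₁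
    ((hA.inter hP₁).union hZ) (union_subset inter_subset_right (hZP.trans inter_subset_left))
    (hh.mono (union_subset_union_left _ inter_subset_left))
    (mapsTo_union.2
      ⟨hfU.congr (hhf.symm.mono inter_subset_left), hhUV.mono_right inter_subset_left⟩)
  obtain ⟨W₂, hW₂, hBW₂, F₂, hF₂, hF₂V, hF₂h⟩ := hV.exists_extension_of_isClosed hP₂
    ((hA.inter hP₂).union hZ) (union_subset inter_subset_right (hZP.trans inter_subset_right))
    (hh.mono (union_subset_union_left _ inter_subset_left))
    (mapsTo_union.2
      ⟨hfV.congr (hhf.symm.mono inter_subset_left), hhUV.mono_right inter_subset_right⟩)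
  set W := (W₁ ∪ P₁ᶜ) ∩ (W₂ ∪ P₂ᶜ) ∩ (V₀ ∪ (P₁ ∩ P₂)ᶜ)
  have hWP₁ : W ∩ P₁ ⊆ P₁ ∩ W₁ := fun p ⟨⟨⟨hp, _⟩, _⟩, hp₁⟩ =>
    ⟨hp₁, hp.resolve_right (not_not.2 hp₁)⟩
  have hWP₂ : W ∩ P₂ ⊆ P₂ ∩ W₂ := fun p ⟨⟨⟨_, hp⟩, _⟩, hp₂⟩ =>
    ⟨hp₂, hp.resolve_right (not_not.2 hp₂)⟩
  have hWZ : W ∩ P₁ ∩ P₂ ⊆ Z := fun p ⟨⟨⟨_, hp⟩, hp₁⟩, hp₂⟩ =>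
    hV₀Z ⟨⟨hp₁, hp₂⟩, hp.resolve_right (not_not.2 ⟨hp₁, hp₂⟩)⟩
  refine ⟨W, ((hW₁.union hP₁.isOpen_compl).inter (hW₂.union hP₂.isOpen_compl)).inter
      (hV₀.union (hP₁.inter hP₂).isOpen_compl), fun a ha => ⟨⟨?_, ?_⟩, ?_⟩,
    P₁.piecewise F₁ F₂, ?_, fun p hp => ?_, fun p hp => ?_⟩
  · exact (em (a ∈ P₁)).imp (fun h₁ => hBW₁ (.inl ⟨ha, h₁⟩)) id
  · exact (em (a ∈ P₂)).imp (fun h₂ => hBW₂ (.inl ⟨ha, h₂⟩)) id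
  · exact (em (a ∈ P₁ ∩ P₂)).imp (fun h₀ => hAV₀ ⟨ha, h₀⟩) id
  · exact ContinuousOn.piecewise_of_isClosed hP₁ hP₂ (fun p _ => hP p) (hF₁.mono hWP₁)
      (hF₂.mono hWP₂) fun p hp => (hF₁h (.inr (hWZ hp))).trans (hF₂h (.inr (hWZ hp))).symm
  · by_cases hp₁ : p ∈ P₁
    · rw [piecewise_eq_of_mem _ _ _ hp₁]
      exact .inl (hF₁U (hWP₁ ⟨hp, hp₁⟩))
    · rw [piecewise_eq_of_notMem _ _ _ hp₁]
      exact .inr (hF₂V (hWP₂ ⟨hp, (hP p).resolve_left hp₁⟩))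
  · by_cases hp₁ : p ∈ P₁
    · rw [piecewise_eq_of_mem _ _ _ hp₁, hF₁h (.inl ⟨hp, hp₁⟩), hhf hp]
    · rw [piecewise_eq_of_notMem _ _ _ hp₁, hF₂h (.inl ⟨hp, (hP p).resolve_left hp₁⟩), hhf hp]

theorem isANE_biUnion_finset {ι : Type*} (t : Finset ι) {U : ι → Set M}
    (hUo : ∀ i, IsOpen (U i)) (hU : ∀ i, IsANE (U i)) : IsANE (⋃ i ∈ t, U i) := by
  classical
  induction t using Finset.induction_on with
  | empty => simpa using isANE_empty
  | insert i t _ ih =>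
    rw [Finset.set_biUnion_insert]
    exact (hU i).union (hUo i) (isOpen_biUnion fun j _ => hUo j) ih

theorem isANE_iUnion_of_pairwise_disjoint {ι : Type*} {S : ι → Set M}
    (hSo : ∀ i, IsOpen (S i)) (hS : ∀ i, IsANE (S i)) (hd : Pairwise (Disjoint on S)) :
    IsANE (⋃ i, S i) := by
  classical
  intro P _ _ _ A f hA hf hfS
  have hAi : ∀ i, IsClosed (A ∩ f ⁻¹' S i) := fun i => by
    have hAi : A ∩ f ⁻¹' S i = A ∩ f ⁻¹' (⋃ (j) (_ : j ≠ i), S j)ᶜ := by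
      ext p
      simp only [mem_inter_iff, mem_preimage, mem_compl_iff, mem_iUnion, not_exists]
      refine and_congr_right fun hpA =>
        ⟨fun hpi j hji hpj => disjoint_left.1 (hd hji) hpj hpi, fun hp => ?_⟩
      obtain ⟨j, hpj⟩ := mem_iUnion.1 (hfS hpA)
      by_cases hji : j = i
      · exact hji ▸ hpj
      · exact absurd hpj (hp j hji)
    rw [hAi]
    exact hf.preimage_isClosed_of_isClosed hA
      (isOpen_iUnion fun j => isOpen_iUnion fun _ => hSo j).isClosed_compl
  obtain ⟨G, hGo, hAG, hGd⟩ :=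
    hf.exists_pairwise_disjoint_isOpen_superset_preimage hA hSo hd hfS
  choose W hW hAW F hF hFS hFf using fun i =>
    hS i P (hAi i) (hf.mono inter_subset_left) fun _ hp => hp.2
  set F' : P → M := fun p => if h : ∃ i, p ∈ G i then F h.choose p else f p
  have hF' : ∀ i, ∀ p ∈ G i, F' p = F i p := fun i p hp => by
    have h : ∃ i, p ∈ G i := ⟨i, hp⟩
    simp only [F', dif_pos h]
    rw [by_contra fun hne => disjoint_left.1 (hGd hne) h.choose_spec hp]
  refine ⟨⋃ i, W i ∩ G i, isOpen_iUnion fun i => (hW i).inter (hGo i), fun a ha => ?_, F',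
    fun x hx => ?_, fun p hp => ?_, fun p hp => ?_⟩
  · obtain ⟨i, hai⟩ := mem_iUnion.1 (hfS ha)
    exact mem_iUnion.2 ⟨i, hAW i ⟨ha, hai⟩, hAG i ⟨ha, hai⟩⟩
  · obtain ⟨i, hxW, hxG⟩ := mem_iUnion.1 hx
    refine (((hF i).continuousAt ((hW i).mem_nhds hxW)).congr ?_).continuousWithinAt
    filter_upwards [(hGo i).mem_nhds hxG] with y hy using (hF' i y hy).symm
  · obtain ⟨i, hpW, hpG⟩ := mem_iUnion.1 hp
    exact mem_iUnion.2 ⟨i, hF' i p hpG ▸ hFS i hpW⟩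
  · obtain ⟨i, hpi⟩ := mem_iUnion.1 (hfS hp)
    exact (hF' i p (hAG i ⟨hp, hpi⟩)).trans (hFf i ⟨hp, hpi⟩)

theorem isANE_univ_of_forall_exists_isANE [T2Space M] [WeaklyLocallyCompactSpace M]
    [SigmaCompactSpace M] (h : ∀ x : M, ∃ U, IsOpen U ∧ x ∈ U ∧ IsANE U) :
    IsANE (univ : Set M) := by
  choose U hUo hxU hU using h
  set K := (CompactExhaustion.choice M).shiftr
  set O : ℕ → Set M := fun i => interior (K (i + 2)) \ K i
  have hOo : ∀ i, IsOpen (O i) := fun i => isOpen_interior.sdiff (K.isCompact i).isClosed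
  have hO : ∀ i, IsANE (O i) := fun i => by
    obtain ⟨t, ht⟩ := (K.isCompact (i + 2)).elim_finite_subcover U hUo
      fun x _ => mem_iUnion.2 ⟨x, hxU x⟩
    exact (isANE_biUnion_finset t hUo hU).mono_of_isOpen (hOo i)
      (sdiff_subset.trans (interior_subset.trans ht))
  have hOd : ∀ i j, i + 2 ≤ j → Disjoint (O i) (O j) := fun i j hij =>
    disjoint_left.2 fun x hxi hxj => hxj.2 (K.subset hij (interior_subset hxi.1))
  have hpar : ∀ c, IsANE (⋃ m, O (2 * m + c)) := fun c =>
    isANE_iUnion_of_pairwise_disjoint (fun _ => hOo _) (fun _ => hO _) fun a b hab =>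
      hab.lt_or_gt.elim (fun _ => hOd _ _ (by omega)) fun _ => (hOd _ _ (by omega)).symm
  have hcover : (⋃ m, O (2 * m + 0)) ∪ ⋃ m, O (2 * m + 1) = univ := by
    refine eq_univ_of_forall fun x => ?_
    have hx := (CompactExhaustion.choice M).mem_sdiff_shiftr_find x
    have hxO : x ∈ O ((CompactExhaustion.choice M).find x) :=
      ⟨K.subset_interior_succ _ hx.1, hx.2⟩
    obtain ⟨m, hm | hm⟩ := Nat.even_or_odd' ((CompactExhaustion.choice M).find x)
    · exact .inl (mem_iUnion.2 ⟨m, hm ▸ hxO⟩)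
    · exact .inr (mem_iUnion.2 ⟨m, hm ▸ hxO⟩)
  rw [← hcover]
  exact (hpar 0).union (isOpen_iUnion fun _ => hOo _) (isOpen_iUnion fun _ => hOo _) (hpar 1)

end ANE

def halfSpaceRetraction (n : ℕ) (y : Fin n → ℝ) : Fin n → ℝ :=
  fun i => if (i : ℕ) + 1 = n then max (y i) 0 else y i

theorem continuous_halfSpaceRetraction (n : ℕ) : Continuous (halfSpaceRetraction n) :=
  continuous_pi fun i => by
    by_cases h : (i : ℕ) + 1 = n
    · simpa only [halfSpaceRetraction, h, if_true] using (continuous_apply i).max continuous_const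
    · simpa only [halfSpaceRetraction, h, if_false] using continuous_apply i

theorem halfSpaceRetraction_mem (n : ℕ) (y : Fin n → ℝ) :
    halfSpaceRetraction n y ∈ HalfSpace n :=
  fun i hi => by simp only [halfSpaceRetraction, hi, if_true, le_max_right]

theorem halfSpaceRetraction_eq_self {n : ℕ} {y : Fin n → ℝ} (hy : y ∈ HalfSpace n) :
    halfSpaceRetraction n y = y := funext fun i => by
  by_cases h : (i : ℕ) + 1 = n
  · simp only [halfSpaceRetraction, h, if_true, max_eq_left (hy i h)]
  · simp only [halfSpaceRetraction, h, if_false]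

theorem IsTopManifold.exists_isOpen_isANE_locallyCompact {n : ℕ} {M : Type}
    [TopologicalSpace M] (hM : IsTopManifold n M) (x : M) :
    ∃ U : Set M, IsOpen U ∧ x ∈ U ∧ IsANE U ∧ WeaklyLocallyCompactSpace U := by
  obtain ⟨U, hU, hxU, s, hs, ⟨e⟩⟩ := hM.2.2 x
  obtain ⟨t, R, r, ht, hr, hrR, hRr, rfl⟩ :
      ∃ (t R : Set (Fin n → ℝ)) (r : (Fin n → ℝ) → Fin n → ℝ), IsOpen t ∧ Continuous r ∧
        (∀ y, r y ∈ R) ∧ (∀ y ∈ R, r y = y) ∧ s = t ∩ R := by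
    rcases hs with hs | ⟨t, ht, rfl⟩
    · exact ⟨s, univ, id, hs, continuous_id, mem_univ, fun _ _ => rfl, (inter_univ s).symm⟩
    · exact ⟨t, _, _, ht, continuous_halfSpaceRetraction n, halfSpaceRetraction_mem n,
        fun _ => halfSpaceRetraction_eq_self, rfl⟩
  have hR : IsClosed R := by
    rw [show R = {y | r y = y} from Set.ext fun y => ⟨hRr y, fun h => h ▸ hrR y⟩]
    exact isClosed_eq hr continuous_id
  have : LocallyCompactSpace ↥(t ∩ R) :=
    (ht.isLocallyClosed.inter hR.isLocallyClosed).locallyCompactSpace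
  exact ⟨U, hU, hxU, isANE_iff_isANR.2 <|
    (isANE_iff_isANR.1 (isANE_inter_of_retraction hr hrR hRr ht)).of_homeomorph e.symm,
    e.isClosedEmbedding.weaklyLocallyCompactSpace⟩

/-- Every topological `n`-manifold is an ANR. -/
theorem statement19 (n : ℕ) (M : Type) [TopologicalSpace M] (hM : IsTopManifold n M) :
    IsANR M := by
  have := hM.1
  have := hM.2.1
  choose U hU hxU hUa hUc using hM.exists_isOpen_isANE_locallyCompact
  have : WeaklyLocallyCompactSpace M :=
    weaklyLocallyCompactSpace_of_forall_exists_isOpen fun x => ⟨U x, hU x, hxU x, hUc x⟩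
  have huniv := isANE_univ_of_forall_exists_isANE fun x => ⟨U x, hU x, hxU x, hUa x⟩
  exact (isANE_iff_isANR.1 huniv).of_homeomorph (Homeomorph.Set.univ M)
end
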